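/- Let n ≥ 2, let x : Fin n → ℝ be a sorted location profile (x i ≤ x j for i ≤ j), let m = x ⌈n/2⌉₋₁ be a median (the k-th smallest where k = ⌈n/2⌉), and let p ≥ 1. Then for every y ∈ ℝ, ∑ i, |m - x i|^p ≤ 2^(p-1) * ∑ i, |y - x i|^p. -/

import Mathlib

/-!
Pair the `i`-th smallest point with the `i`-th largest. The median lies between the two, so its
`p`-th power costs to them sum to at most `(x_{n-1-i} - x_i) ^ p` by superadditivity of `t ↦ t ^ p`,
while any `y` has `|y - x_i| + |y - x_{n-1-i}| ≥ x_{n-1-i} - x_i`, whence, by convexity of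
`t ↦ t ^ p`, `2 ^ (p - 1) (|y - x_i| ^ p + |y - x_{n-1-i}| ^ p) ≥ (x_{n-1-i} - x_i) ^ p`.
Summing over all `i` counts every point twice on both sides.
-/

open Set

lemma Real.rpow_add_le_mul_rpow_add_rpow {a b p : ℝ} (ha : 0 ≤ a) (hb : 0 ≤ b)
    (hp : 1 ≤ p) : (a + b) ^ p ≤ 2 ^ (p - 1) * (a ^ p + b ^ p) := by
  lift a to NNReal using ha
  lift b to NNReal using hb
  exact_mod_cast NNReal.rpow_add_le_mul_rpow_add_rpow a b hp

lemma abs_sub_add_abs_sub_of_mem_uIcc {a b m : ℝ} (hm : m ∈ uIcc a b) :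
    |m - a| + |m - b| = |b - a| := by
  rcases mem_uIcc.1 hm with ⟨h₁, h₂⟩ | ⟨h₁, h₂⟩
  · rw [abs_of_nonneg (sub_nonneg.2 h₁), abs_of_nonpos (sub_nonpos.2 h₂),
      abs_of_nonneg (sub_nonneg.2 (h₁.trans h₂))]; ring
  · rw [abs_of_nonpos (sub_nonpos.2 h₂), abs_of_nonneg (sub_nonneg.2 h₁),
      abs_of_nonpos (sub_nonpos.2 (h₁.trans h₂))]; ring

lemma rpow_abs_sub_add_rpow_abs_sub_le_of_mem_uIcc {a b m p : ℝ} (hm : m ∈ uIcc a b) (hp : 1 ≤ p)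
    (y : ℝ) : |m - a| ^ p + |m - b| ^ p ≤ 2 ^ (p - 1) * (|y - a| ^ p + |y - b| ^ p) :=
  calc |m - a| ^ p + |m - b| ^ p ≤ (|m - a| + |m - b|) ^ p :=
        Real.add_rpow_le_rpow_add (abs_nonneg _) (abs_nonneg _) hp
    _ = |b - a| ^ p := by rw [abs_sub_add_abs_sub_of_mem_uIcc hm]
    _ ≤ (|y - a| + |y - b|) ^ p := by
        gcongr
        rw [abs_sub_comm y b, add_comm]
        exact abs_sub_le b y a
    _ ≤ 2 ^ (p - 1) * (|y - a| ^ p + |y - b| ^ p) :=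
        Real.rpow_add_le_mul_rpow_add_rpow (abs_nonneg _) (abs_nonneg _) hp

theorem sum_rpow_abs_sub_le_of_forall_mem_uIcc {ι : Type*} [Fintype ι] (e : Equiv.Perm ι)
    {x : ι → ℝ} {m p : ℝ} (hm : ∀ i, m ∈ uIcc (x i) (x (e i))) (hp : 1 ≤ p) (y : ℝ) :
    ∑ i, |m - x i| ^ p ≤ 2 ^ (p - 1) * ∑ i, |y - x i| ^ p := by
  have hsum (c : ℝ) : 2 * ∑ i, |c - x i| ^ p = ∑ i, (|c - x i| ^ p + |c - x (e i)| ^ p) := by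
    rw [Finset.sum_add_distrib, Equiv.sum_comp e (fun i ↦ |c - x i| ^ p), two_mul]
  have h := Finset.sum_le_sum fun i (_ : i ∈ Finset.univ) ↦
    rpow_abs_sub_add_rpow_abs_sub_le_of_mem_uIcc (hm i) hp y
  rw [← Finset.mul_sum, ← hsum, ← hsum] at h
  linarith

lemma Fin.mem_uIcc_rev {n : ℕ} (k i : Fin n) (hk : n ≤ 2 * k + 2) (hk' : 2 * k + 1 ≤ n) :
    k ∈ uIcc i i.rev := by
  simp only [mem_uIcc, Fin.le_def, Fin.val_rev]
  omega

theorem median_approx (n : ℕ) (hn : 2 ≤ n) (x : Fin n → ℝ)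
    (hsorted : ∀ i j : Fin n, i ≤ j → x i ≤ x j) (p : ℝ) (hp : 1 ≤ p)
    (m : ℝ) (hm : m = x ⟨(n + 1) / 2 - 1, by omega⟩) :
    ∀ y : ℝ, ∑ i, |m - x i| ^ p ≤ 2 ^ (p - 1) * ∑ i, |y - x i| ^ p := by
  have hmono : Monotone x := fun i j ↦ hsorted i j
  refine sum_rpow_abs_sub_le_of_forall_mem_uIcc Fin.revPerm (fun i ↦ ?_) hp
  rw [hm]
  exact hmono.mapsTo_uIcc (Fin.mem_uIcc_rev _ i (by dsimp only; omega) (by dsimp only; omega))
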